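/- arXiv:2309.07522 — 3 statements merged into one kernel-verified Lean document; each statement's English description precedes it below -/
import Mathlib

section
/- Let m and n be odd positive integers. Then there are no integers a, b with (2m)ⁿ = a² + b² − ab. -/
/-!
The form `a² + b² - ab` is the norm of `a - bω` in the Eisenstein integers, where `2` is inert.
Concretely, if `2` divides `a² + b² - ab` then `a` and `b` are both even, so `4` divides it and the
quotient is again a value of the form; hence the power of `2` dividing a value of the form is even,
while in `(2m)ⁿ` with `m` and `n` odd it is `n`.
-/

lemma two_dvd_and_two_dvd_of_two_dvd_sq_add_sq_sub_mul {a b : ℤ}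
    (h : 2 ∣ a ^ 2 + b ^ 2 - a * b) : 2 ∣ a ∧ 2 ∣ b := by
  simp only [← even_iff_two_dvd] at h ⊢
  simp only [parity_simps] at h
  tauto

lemma exists_sq_add_sq_sub_mul_eq_four_mul {a b : ℤ} (h : 2 ∣ a ^ 2 + b ^ 2 - a * b) :
    ∃ x y : ℤ, a ^ 2 + b ^ 2 - a * b = 4 * (x ^ 2 + y ^ 2 - x * y) := by
  obtain ⟨⟨x, rfl⟩, ⟨y, rfl⟩⟩ := two_dvd_and_two_dvd_of_two_dvd_sq_add_sq_sub_mul h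
  exact ⟨x, y, by ring⟩

lemma even_of_two_pow_mul_odd_eq_sq_add_sq_sub_mul :
    ∀ {k : ℕ} {c a b : ℤ}, Odd c → 2 ^ k * c = a ^ 2 + b ^ 2 - a * b → Even k
  | 0, _, _, _, _, _ => .zero
  | 1, c, a, b, hc, h => by
    obtain ⟨x, y, hxy⟩ := exists_sq_add_sq_sub_mul_eq_four_mul ⟨c, by rw [← h, pow_one]⟩
    have : c = 2 * (x ^ 2 + y ^ 2 - x * y) := by linarith
    exact absurd (even_iff_two_dvd.mpr ⟨_, this⟩) (Int.not_even_iff_odd.mpr hc)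
  | k + 2, c, a, b, hc, h => by
    obtain ⟨x, y, hxy⟩ := exists_sq_add_sq_sub_mul_eq_four_mul ⟨2 ^ (k + 1) * c, by rw [← h]; ring⟩
    have : 2 ^ k * c = x ^ 2 + y ^ 2 - x * y :=
      mul_left_cancel₀ four_ne_zero (by rw [← hxy, ← h]; ring)
    exact (even_of_two_pow_mul_odd_eq_sq_add_sq_sub_mul hc this).add even_two

theorem stmt_4_general (m n : ℕ) (hm : Odd m) (hn : Odd n) :
    ¬ ∃ a b : ℤ, ((2 * m : ℤ)) ^ n = a ^ 2 + b ^ 2 - a * b := by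
  rintro ⟨a, b, h⟩
  have hmn : Odd ((m : ℤ) ^ n) := by exact_mod_cast hm.pow
  have : Even n := even_of_two_pow_mul_odd_eq_sq_add_sq_sub_mul hmn (by rw [← h, mul_pow])
  exact Nat.not_even_iff_odd.mpr hn this

theorem stmt_4 (m n : ℕ) (hm : Odd m) (hn : Odd n) (hm1 : 1 ≤ m) :
    ¬ ∃ a b : ℤ, ((2 * m : ℤ)) ^ n = a ^ 2 + b ^ 2 - a * b :=
  stmt_4_general m n hm hn
end

section
/- Let p be a prime with p ≡ 2 (mod 3), let n be odd, and let w = pʳ·m with r odd and p ∤ m. Then there are no integers a, b with wⁿ = a² + b² − ab. -/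
/-!
Since `4 (a² - ab + b²) = (2a - b)² + 3b²`, the form `a² - ab + b²` is the norm form of the
Eisenstein integers, in which a prime `p ≡ 2 (mod 3)` stays inert. Concretely: a nontrivial zero
of `x² - x + 1` modulo `p` would make `-x` an element of order `3` in `(ℤ/p)ˣ`, impossible as
`3 ∤ p - 1`. Hence `p ∣ a² - ab + b²` forces `p ∣ a` and `p ∣ b`, and dividing out `p²` repeatedly
shows that `p` divides `a² - ab + b²` to an even power, whereas it divides `(pʳm)ⁿ` exactly `rn`
times.
-/

namespace ZMod

variable {p : ℕ} [Fact p.Prime]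

theorem sq_sub_self_add_one_ne_zero (hp : p % 3 = 2) (x : ZMod p) : x ^ 2 - x + 1 ≠ 0 := by
  intro h
  have hcube : (-x) ^ 3 = 1 := by linear_combination (-(x + 1)) * h
  have hne : -x ≠ 1 := by
    intro hx
    have h3 : ((3 : ℕ) : ZMod p) = 0 := by push_cast; linear_combination h + (x - 2) * hx
    have := (Nat.prime_dvd_prime_iff_eq Fact.out Nat.prime_three).1
      ((natCast_eq_zero_iff 3 p).1 h3)
    omega
  have : Fact (Nat.Prime 3) := ⟨Nat.prime_three⟩
  have hdvd := orderOf_dvd_card_sub_one (p := p) (a := -x) (by rintro h0; simp [h0] at hcube)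
  rw [orderOf_eq_prime hcube hne] at hdvd
  omega

theorem eq_zero_of_sq_add_sq_sub_mul_eq_zero (hp : p % 3 = 2) {a b : ZMod p}
    (h : a ^ 2 + b ^ 2 - a * b = 0) : a = 0 ∧ b = 0 := by
  have hb : b = 0 := by
    by_contra hb
    apply sq_sub_self_add_one_ne_zero hp (a / b)
    field_simp
    linear_combination h
  subst hb
  exact ⟨pow_eq_zero_iff two_ne_zero |>.1 (by linear_combination h), rfl⟩

end ZMod

namespace Int

variable {p : ℕ}

theorem dvd_of_dvd_sq_add_sq_sub_mul (hp : p.Prime) (hp3 : p % 3 = 2) {a b : ℤ}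
    (h : (p : ℤ) ∣ a ^ 2 + b ^ 2 - a * b) : (p : ℤ) ∣ a ∧ (p : ℤ) ∣ b := by
  have : Fact p.Prime := ⟨hp⟩
  simp only [← ZMod.intCast_zmod_eq_zero_iff_dvd] at h ⊢
  push_cast at h
  exact ZMod.eq_zero_of_sq_add_sq_sub_mul_eq_zero hp3 h

theorem even_of_prime_pow_mul_eq_sq_add_sq_sub_mul (hp : p.Prime) (hp3 : p % 3 = 2) {c : ℤ}
    (hc : ¬ (p : ℤ) ∣ c) (s : ℕ) {a b : ℤ} (h : (p : ℤ) ^ s * c = a ^ 2 + b ^ 2 - a * b) :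
    Even s := by
  induction s using Nat.strong_induction_on generalizing a b with | _ s ih => ?_
  rcases s with _ | s
  · exact .zero
  have hp0 : (p : ℤ) ≠ 0 := by exact_mod_cast hp.ne_zero
  obtain ⟨⟨a', rfl⟩, ⟨b', rfl⟩⟩ := dvd_of_dvd_sq_add_sq_sub_mul hp hp3
    (h ▸ (dvd_pow_self _ s.succ_ne_zero).mul_right _)
  rcases s with _ | s
  · refine absurd ⟨a' ^ 2 + b' ^ 2 - a' * b', mul_left_cancel₀ hp0 ?_⟩ hc
    linear_combination h
  · have h' : (p : ℤ) ^ s * c = a' ^ 2 + b' ^ 2 - a' * b' :=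
      mul_left_cancel₀ (pow_ne_zero 2 hp0) (by linear_combination h)
    exact (ih s (by omega) h').add even_two

end Int

theorem stmt_5 (p : ℕ) (hp : p.Prime) (hp2 : p % 3 = 2) (r n m : ℕ)
    (hr : Odd r) (hn : Odd n) (hm : ¬ p ∣ m) :
    ¬ ∃ a b : ℤ, ((p : ℤ) ^ r * m) ^ n = a ^ 2 + b ^ 2 - a * b := by
  rintro ⟨a, b, h⟩
  have hmn : ¬ (p : ℤ) ∣ (m : ℤ) ^ n := fun hd =>
    hm (Int.natCast_dvd_natCast.1 ((Nat.prime_iff_prime_int.1 hp).dvd_of_dvd_pow hd))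
  rw [mul_pow, ← pow_mul] at h
  exact Nat.not_even_iff_odd.2 (hr.mul hn)
    (Int.even_of_prime_pow_mul_eq_sq_add_sq_sub_mul hp hp2 hmn _ h)
end

section
/- Suppose p ≡ 2 (mod 3) is prime and integers a', b' are both nonzero mod p with −a'·b' ≡ (a'−b')² (mod p). Then a contradiction follows. -/
theorem stmt_16 (p : ℕ) (hp : p.Prime) (hp2 : p % 3 = 2) (a b : ZMod p)
    (ha : a ≠ 0) (hb : b ≠ 0) (h : -(a * b) = (a - b) ^ 2) : False := by
  haveI : Fact p.Prime := ⟨hp⟩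
  have hcube : a ^ 3 = (-b) ^ 3 := by linear_combination (-(a+b)) * h
  have hcop : Nat.Coprime (Nat.card (ZMod p)ˣ) 3 := by
    rw [Nat.card_eq_fintype_card, ZMod.card_units_eq_totient, Nat.totient_prime hp]
    have h3 : ¬ (3 ∣ p - 1) := by
      rintro ⟨k, hk⟩
      have := hp.two_le
      omega
    exact Nat.coprime_comm.mpr ((Nat.Prime.coprime_iff_not_dvd Nat.prime_three).mpr h3)
  set u : (ZMod p)ˣ := Units.mk0 a ha with hu
  set v : (ZMod p)ˣ := Units.mk0 (-b) (neg_ne_zero.mpr hb) with hv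
  have huv : u ^ 3 = v ^ 3 := by
    ext
    push_cast [hu, hv]
    simpa [pow_succ] using hcube
  have heq : u = v := hcop.pow_left_bijective.injective huv
  have hab : a = -b := by
    have := congrArg Units.val heq
    simpa [hu, hv] using this
  have h3b : (3 : ZMod p) * b ^ 2 = 0 := by
    rw [hab] at h
    linear_combination -h
  have hb2 : b ^ 2 ≠ 0 := pow_ne_zero _ hb
  have h3z : (3 : ZMod p) = 0 := by
    rcases mul_eq_zero.mp h3b with h' | h'
    · exact h'
    · exact absurd h' hb2
  have : (p : ℕ) ∣ 3 := by
    have := (ZMod.natCast_eq_zero_iff 3 p).mp (by exact_mod_cast h3z)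
    exact this
  have := Nat.le_of_dvd (by norm_num) this
  interval_cases p <;> omega
end
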